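/- Let H=(V,E,w) be a honeycomb such that every semiinfinite edge e of H has integer constant dual coordinate d^c(e), and such that div_w(v)=0 for every nonintegral vertex v of H. Then every edge e of H satisfies d^c(e) ∈ ℤ (and consequently all dual coordinates of all vertices of H are integers). -/

import Mathlib

open scoped BigOperators

attribute [local instance] Classical.propDecidable

noncomputable section

/-- Points of the plane. -/
abbrev Pt : Type := ℝ × ℝ

/-- Inner product on the plane. -/
def pdot (a b : Pt) : ℝ := a.1 * b.1 + a.2 * b.2

/-- The three generating vectors ξ₁ = (1,0), ξ₂ = (−1/2, √3/2), ξ₃ = (−1/2, −√3/2). -/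
noncomputable def xiv : Fin 3 → Pt
  | 0 => ((1 : ℝ), (0 : ℝ))
  | 1 => (-(1 / 2 : ℝ), Real.sqrt 3 / 2)
  | 2 => (-(1 / 2 : ℝ), -(Real.sqrt 3 / 2))

/-- Dual coordinates d_i(x) = −x·ξ_i. -/
noncomputable def dcoord (i : Fin 3) (x : Pt) : ℝ := -(pdot x (xiv i))

/-- Direction of the ray Ξ_i^s(·): ξ_i rotated by −90° for s = +(true), by +90° for
s = −(false), so that Ξ_i⁺(v)−v, ℝ₊ξ_i, Ξ_i⁻(v)−v follow anticlockwise. -/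
noncomputable def rayDir (i : Fin 3) (s : Bool) : Pt :=
  if s then ((xiv i).2, -(xiv i).1) else (-(xiv i).2, (xiv i).1)

/-- The ray Ξ_i^s(v). -/
def XiRay (i : Fin 3) (s : Bool) (v : Pt) : Set Pt :=
  {x | ∃ t : ℝ, 0 ≤ t ∧ x = v + t • rayDir i s}

/-- A finite line (nondegenerate segment). -/
def IsSegL (S : Set Pt) : Prop := ∃ a b : Pt, a ≠ b ∧ S = segment ℝ a b

/-- A semiinfinite line (ray) with end a. -/
def IsRayFrom (a : Pt) (S : Set Pt) : Prop :=
  ∃ d : Pt, d ≠ 0 ∧ S = {x | ∃ t : ℝ, 0 ≤ t ∧ x = a + t • d}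

/-- A semiinfinite line (ray). -/
def IsRayL (S : Set Pt) : Prop := ∃ a : Pt, IsRayFrom a S

/-- A fully infinite line. -/
def IsFullLineL (S : Set Pt) : Prop := ∃ a d : Pt, d ≠ 0 ∧ S = {x | ∃ t : ℝ, x = a + t • d}

/-- A line: a segment, a ray or a full line. -/
def IsLineL (S : Set Pt) : Prop := IsSegL S ∨ IsRayL S ∨ IsFullLineL S

/-- `S` is perpendicular to ξ_i, i.e. the dual coordinate d_i is constant on S. -/
def PerpTo (i : Fin 3) (S : Set Pt) : Prop := ∀ x ∈ S, ∀ y ∈ S, pdot (x - y) (xiv i) = 0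

/-- w_i^s(v): the total weight of the lines of the system whose intersection with
Ξ_i^s(v) contains v and is a line (not a point). -/
noncomputable def wis (L : Finset (Set Pt)) (w : Set Pt → ℤ) (i : Fin 3) (s : Bool)
    (v : Pt) : ℤ :=
  ∑ ℓ ∈ L.filter (fun ℓ => v ∈ ℓ ∧ IsLineL (ℓ ∩ XiRay i s v)), w ℓ

/-- A Ξ-system: a finite set of lines, each perpendicular to some ξ_i. -/
def IsXiSystem (L : Finset (Set Pt)) : Prop := ∀ ℓ ∈ L, IsLineL ℓ ∧ ∃ i : Fin 3, PerpTo i ℓ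

/-- A pre-honeycomb: a Ξ-system with all w_i^s(v) nonnegative satisfying the
divergency (zero-tension) condition at every point. -/
def IsPreHoneycomb (L : Finset (Set Pt)) (w : Set Pt → ℤ) : Prop :=
  IsXiSystem L ∧ (∀ (v : Pt) (i : Fin 3) (s : Bool), 0 ≤ wis L w i s v) ∧
  ∀ (v : Pt) (i j : Fin 3),
    wis L w i true v - wis L w i false v = wis L w j true v - wis L w j false v

/-- The divergency div_w(v). -/
noncomputable def divw (L : Finset (Set Pt)) (w : Set Pt → ℤ) (v : Pt) : ℤ :=
  wis L w 0 true v - wis L w 0 false v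

/-- An interior (non-end) point of a line. -/
def InteriorPt (S : Set Pt) (x : Pt) : Prop :=
  x ∈ S ∧ ∃ d : Pt, d ≠ 0 ∧ ∃ ε : ℝ, 0 < ε ∧ ∀ t : ℝ, |t| ≤ ε → x + t • d ∈ S

/-- `v` is an end of the line `S` (so `S` is incident to `v` as a graph edge). -/
def IsEnd (v : Pt) (S : Set Pt) : Prop := v ∈ S ∧ ¬ InteriorPt S v

/-- A honeycomb: a (non-standard) planar graph with a nonempty finite vertex set, whose
edges are positively weighted lines, each vertex incident with at least 3 edges, no
interior point of an edge lying on another edge, the ends of edges being vertices, and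
the weighted edge set forming a pre-honeycomb. -/
structure Honeycomb : Type where
  verts : Finset Pt
  edges : Finset (Set Pt)
  w : Set Pt → ℤ
  verts_nonempty : verts.Nonempty
  degree : ∀ v ∈ verts, 3 ≤ (edges.filter fun e => IsEnd v e).card
  no_cross : ∀ e ∈ edges, ∀ e' ∈ edges, e ≠ e' → ∀ x : Pt, InteriorPt e x → x ∉ e'
  w_pos : ∀ e ∈ edges, 0 < w e
  ends_mem : ∀ e ∈ edges, ∀ x : Pt, IsEnd x e → x ∈ verts
  edge_touch : ∀ e ∈ edges, ∃ v ∈ verts, v ∈ e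
  pre : IsPreHoneycomb edges w

/-- The constant dual coordinate of the edge `e` is an integer. -/
def EdgeIntegral (e : Set Pt) : Prop :=
  ∀ i : Fin 3, PerpTo i e → ∀ x ∈ e, ∃ z : ℤ, dcoord i x = (z : ℝ)

/-!
Suppose an edge lies on a line `d_i = c` with `c ∉ ℤ`. The rays on that line are integral, so
all edges on it are segments and their union is compact; let `p` be its last point in the
direction of `Ξ_i⁺`. Then `p` ends an edge, so it is a vertex; it is nonintegral, hence
balanced: `w_i⁺(p) = w_i⁻(p) > 0`. So some edge leaves `p` along `Ξ_i⁺(p)`; it lies on the same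
line and goes beyond `p`, a contradiction.

At a vertex at least three edges end. Two edges perpendicular to the same `ξ_i` leaving the
vertex on the same side would overlap, so two of the three are not parallel; their integral
constant dual coordinates fix two dual coordinates of the vertex, and `d₁ + d₂ + d₃ = 0` the third.
-/

@[simp] lemma pdot_add_left (a b c : Pt) : pdot (a + b) c = pdot a c + pdot b c := by
  simp only [pdot, Prod.fst_add, Prod.snd_add]; ring

@[simp] lemma pdot_sub_left (a b c : Pt) : pdot (a - b) c = pdot a c - pdot b c := by
  simp only [pdot, Prod.fst_sub, Prod.snd_sub]; ring

@[simp] lemma pdot_smul_left (t : ℝ) (a c : Pt) : pdot (t • a) c = t * pdot a c := by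
  simp only [pdot, Prod.smul_fst, Prod.smul_snd, smul_eq_mul]; ring

lemma continuous_pdot_left (c : Pt) : Continuous fun x : Pt => pdot x c := by
  unfold pdot; fun_prop

lemma xiv_fst_sq_add_snd_sq (i : Fin 3) : (xiv i).1 ^ 2 + (xiv i).2 ^ 2 = 1 := by
  have h3 : Real.sqrt 3 ^ 2 = 3 := Real.sq_sqrt (by norm_num)
  fin_cases i <;> simp [xiv] <;> linarith

lemma rayDir_false (i : Fin 3) : rayDir i false = -rayDir i true := by
  simp [rayDir]

lemma pdot_rayDir_xiv (i : Fin 3) (s : Bool) : pdot (rayDir i s) (xiv i) = 0 := by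
  cases s <;> simp only [rayDir, pdot, Bool.false_eq_true, if_false, if_true] <;> ring

lemma pdot_rayDir_self (i : Fin 3) : pdot (rayDir i true) (rayDir i true) = 1 := by
  simpa [rayDir, pdot, add_comm, sq] using xiv_fst_sq_add_snd_sq i

lemma rayDir_ne_zero (i : Fin 3) : rayDir i true ≠ 0 := fun h => by
  simpa [h, pdot] using pdot_rayDir_self i

lemma eq_smul_rayDir_of_pdot_xiv {i : Fin 3} {u : Pt} (h : pdot u (xiv i) = 0) :
    u = pdot u (rayDir i true) • rayDir i true := by
  have hn := xiv_fst_sq_add_snd_sq i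
  simp only [pdot] at h
  ext <;> simp only [rayDir, if_true, pdot, Prod.smul_fst, Prod.smul_snd, smul_eq_mul]
  · linear_combination (xiv i).1 * h - u.1 * hn
  · linear_combination (xiv i).2 * h - u.2 * hn

lemma pdot_add_smul_rayDir (i : Fin 3) (v : Pt) (t : ℝ) :
    pdot (v + t • rayDir i true) (rayDir i true) = pdot v (rayDir i true) + t := by
  simp [pdot_rayDir_self]

lemma dcoord_eq_iff {i : Fin 3} {x y : Pt} :
    dcoord i x = dcoord i y ↔ pdot (x - y) (xiv i) = 0 := by
  simp only [dcoord, pdot_sub_left]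
  constructor <;> intro h <;> linarith

lemma PerpTo.dcoord_eq {i : Fin 3} {S : Set Pt} (h : PerpTo i S) {x y : Pt} (hx : x ∈ S)
    (hy : y ∈ S) : dcoord i x = dcoord i y :=
  dcoord_eq_iff.2 (h x hx y hy)

lemma perpTo_of_subset {i : Fin 3} {c : ℝ} {S : Set Pt} (h : S ⊆ {x | dcoord i x = c}) :
    PerpTo i S := fun _ hx _ hy =>
  dcoord_eq_iff.1 ((h hx).trans (h hy).symm)

lemma dcoord_add_smul_rayDir (i : Fin 3) (s : Bool) (v : Pt) (t : ℝ) :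
    dcoord i (v + t • rayDir i s) = dcoord i v :=
  dcoord_eq_iff.2 (by simp [pdot_rayDir_xiv])

lemma eq_add_smul_rayDir {i : Fin 3} {x v : Pt} (h : dcoord i x = dcoord i v) :
    x = v + pdot (x - v) (rayDir i true) • rayDir i true := by
  rw [← eq_smul_rayDir_of_pdot_xiv (dcoord_eq_iff.1 h)]; abel

lemma eq_of_dcoord_eq {i j : Fin 3} (hij : i ≠ j) {x y : Pt} (hi : dcoord i x = dcoord i y)
    (hj : dcoord j x = dcoord j y) : x = y := by
  have h3 : 0 < Real.sqrt 3 := by positivity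
  obtain ⟨x₁, x₂⟩ := x
  obtain ⟨y₁, y₂⟩ := y
  fin_cases i <;> fin_cases j <;> simp [dcoord, xiv, pdot] at hij hi hj ⊢ <;>
    constructor <;> nlinarith

lemma dcoord_add_add (x : Pt) : dcoord 0 x + dcoord 1 x + dcoord 2 x = 0 := by
  simp only [dcoord, xiv, pdot]; ring

lemma dcoord_eq_neg_add {i j k : Fin 3} (hij : i ≠ j) (hik : i ≠ k) (hjk : j ≠ k) (x : Pt) :
    dcoord k x = -(dcoord i x + dcoord j x) := by
  have := dcoord_add_add x
  fin_cases i <;> fin_cases j <;> fin_cases k <;> simp at hij hik hjk ⊢ <;> linarith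

lemma exists_int_dcoord_of_ne {i j : Fin 3} (hij : i ≠ j) {x : Pt}
    (hi : ∃ z : ℤ, dcoord i x = z) (hj : ∃ z : ℤ, dcoord j x = z) (k : Fin 3) :
    ∃ z : ℤ, dcoord k x = z := by
  obtain ⟨a, ha⟩ := hi
  obtain ⟨b, hb⟩ := hj
  by_cases hki : k = i
  · exact hki ▸ ⟨a, ha⟩
  by_cases hkj : k = j
  · exact hkj ▸ ⟨b, hb⟩
  refine ⟨-a - b, ?_⟩
  rw [dcoord_eq_neg_add hij (Ne.symm hki) (Ne.symm hkj), ha, hb]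
  push_cast
  ring

lemma IsLineL.nontrivial {S : Set Pt} (h : IsLineL S) : S.Nontrivial := by
  rcases h with ⟨a, b, hab, rfl⟩ | ⟨a, d, hd, rfl⟩ | ⟨a, d, hd, rfl⟩
  · exact ⟨a, left_mem_segment ℝ a b, b, right_mem_segment ℝ a b, hab⟩
  · exact ⟨a, ⟨0, le_rfl, by simp⟩, a + d, ⟨1, zero_le_one, by simp⟩, by simpa using hd⟩
  · exact ⟨a, ⟨0, by simp⟩, a + d, ⟨1, by simp⟩, by simpa using hd⟩

lemma convex_setOf_add_smul {s : Set ℝ} (hs : Convex ℝ s) (a d : Pt) :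
    Convex ℝ {x | ∃ t ∈ s, x = a + t • d} := by
  rintro _ ⟨t₁, ht₁, rfl⟩ _ ⟨t₂, ht₂, rfl⟩ α β hα hβ hαβ
  refine ⟨α * t₁ + β * t₂, hs ht₁ ht₂ hα hβ hαβ, ?_⟩
  linear_combination (norm := module) hαβ • a

lemma IsLineL.convex {S : Set Pt} (h : IsLineL S) : Convex ℝ S := by
  rcases h with ⟨a, b, -, rfl⟩ | ⟨a, d, -, rfl⟩ | ⟨a, d, -, rfl⟩
  · exact convex_segment a b
  · exact convex_setOf_add_smul (convex_Ici 0) a d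
  · simpa using convex_setOf_add_smul convex_univ a d

lemma IsSegL.isCompact {S : Set Pt} (h : IsSegL S) : IsCompact S := by
  obtain ⟨a, b, -, rfl⟩ := h
  rw [segment_eq_image]
  exact isCompact_Icc.image (by fun_prop)

lemma Convex.interiorPt_add_smul {S : Set Pt} (hS : Convex ℝ S) {v d : Pt} (hv : v ∈ S)
    (hvd : v + d ∈ S) (hd : d ≠ 0) {t : ℝ} (ht₀ : 0 < t) (ht₁ : t < 1) :
    InteriorPt S (v + t • d) := by
  have hmem : ∀ s ∈ Set.Icc (0 : ℝ) 1, v + s • d ∈ S := fun s hs => hS.add_smul_mem hv hvd hs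
  refine ⟨hmem t ⟨ht₀.le, ht₁.le⟩, d, hd, min t (1 - t), lt_min ht₀ (by linarith), fun s hs => ?_⟩
  obtain ⟨hs₁, hs₂⟩ := abs_le.1 hs
  rw [add_assoc, ← add_smul]
  exact hmem _ ⟨by linarith [min_le_left t (1 - t)], by linarith [min_le_right t (1 - t)]⟩

lemma XiRay_subset (i : Fin 3) (s : Bool) (v : Pt) :
    XiRay i s v ⊆ {x | dcoord i x = dcoord i v} := by
  rintro _ ⟨t, -, rfl⟩
  exact dcoord_add_smul_rayDir i s v t

lemma PerpTo.eq_of_isLineL_inter_XiRay {i j : Fin 3} {s : Bool} {v : Pt} {ℓ : Set Pt}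
    (hj : PerpTo j ℓ) (h : IsLineL (ℓ ∩ XiRay i s v)) : j = i := by
  obtain ⟨x, hx, y, hy, hxy⟩ := h.nontrivial
  by_contra hji
  refine hxy (eq_of_dcoord_eq hji (hj.dcoord_eq hx.1 hy.1) ?_)
  rw [XiRay_subset i s v hx.2, XiRay_subset i s v hy.2]

lemma isEnd_of_isMaxOn {i : Fin 3} {S : Set Pt} (hS : PerpTo i S) {p : Pt} (hp : p ∈ S)
    (hmax : IsMaxOn (fun x => pdot x (rayDir i true)) S p) : IsEnd p S := by
  refine ⟨hp, fun ⟨_, d, hd, ε, hε, hmem⟩ => ?_⟩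
  have hplus := hmem ε (abs_of_pos hε).le
  have hminus := hmem (-ε) (by rw [abs_neg, abs_of_pos hε])
  have hdξ : pdot d (xiv i) = 0 := by
    have := hS _ hplus _ hp
    simp only [add_sub_cancel_left, pdot_smul_left] at this
    exact (mul_eq_zero.1 this).resolve_left hε.ne'
  have hdD : pdot d (rayDir i true) ≠ 0 := fun h0 =>
    hd (by rw [eq_smul_rayDir_of_pdot_xiv hdξ, h0, zero_smul])
  have h₁ := isMaxOn_iff.1 hmax _ hplus
  have h₂ := isMaxOn_iff.1 hmax _ hminus
  simp only [pdot_add_left, pdot_smul_left] at h₁ h₂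
  rcases hdD.lt_or_gt with h | h <;> nlinarith

lemma mem_XiRay_false_of_pdot_le {i : Fin 3} {x p : Pt} (hx : dcoord i x = dcoord i p)
    (hle : pdot x (rayDir i true) ≤ pdot p (rayDir i true)) : x ∈ XiRay i false p := by
  refine ⟨pdot p (rayDir i true) - pdot x (rayDir i true), by linarith, ?_⟩
  rw [rayDir_false, smul_neg, ← neg_smul, neg_sub, ← pdot_sub_left]
  exact eq_add_smul_rayDir hx

lemma exists_pdot_lt_of_isLineL_inter_XiRay {i : Fin 3} {p : Pt} {ℓ : Set Pt}
    (h : IsLineL (ℓ ∩ XiRay i true p)) :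
    ∃ x ∈ ℓ, pdot p (rayDir i true) < pdot x (rayDir i true) := by
  obtain ⟨_, ⟨hx, t₁, ht₁, rfl⟩, _, ⟨hy, t₂, ht₂, rfl⟩, hne⟩ := h.nontrivial
  rcases ht₁.lt_or_eq with h₁ | rfl
  · exact ⟨_, hx, by rw [pdot_add_smul_rayDir]; linarith⟩
  rcases ht₂.lt_or_eq with h₂ | rfl
  · exact ⟨_, hy, by rw [pdot_add_smul_rayDir]; linarith⟩
  exact absurd rfl hne

lemma PerpTo.exists_add_smul_rayDir_mem {i : Fin 3} {e : Set Pt} (he : PerpTo i e)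
    (hne : e.Nontrivial) {v : Pt} (hv : v ∈ e) : ∃ l : ℝ, l ≠ 0 ∧ v + l • rayDir i true ∈ e := by
  obtain ⟨q, hq, hqv⟩ := hne.exists_ne v
  have hqe := eq_add_smul_rayDir (he.dcoord_eq hq hv)
  refine ⟨pdot (q - v) (rayDir i true), fun h0 => hqv ?_, hqe ▸ hq⟩
  rw [hqe, h0, zero_smul, add_zero]

lemma div_pos_or_div_pos_or_div_pos {a b c : ℝ} (ha : a ≠ 0) (hb : b ≠ 0) (hc : c ≠ 0) :
    0 < b / a ∨ 0 < c / a ∨ 0 < c / b := by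
  simp only [div_pos_iff]
  rcases ha.lt_or_gt with ha | ha <;> rcases hb.lt_or_gt with hb | hb <;>
    rcases hc.lt_or_gt with hc | hc <;> tauto

lemma IsPreHoneycomb.wis_true_eq_false {L : Finset (Set Pt)} {w : Set Pt → ℤ}
    (hL : IsPreHoneycomb L w) {v : Pt} (hv : divw L w v = 0) (i : Fin 3) :
    wis L w i true v = wis L w i false v := by
  have := hL.2.2 v i 0
  unfold divw at hv
  linarith

namespace Honeycomb

variable (H : Honeycomb)

lemma wis_pos_iff {i : Fin 3} {s : Bool} {v : Pt} :
    0 < wis H.edges H.w i s v ↔ ∃ ℓ ∈ H.edges, v ∈ ℓ ∧ IsLineL (ℓ ∩ XiRay i s v) := by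
  unfold wis
  rw [Finset.sum_pos_iff_of_nonneg fun ℓ hℓ => (H.w_pos ℓ (Finset.mem_filter.1 hℓ).1).le]
  constructor
  · rintro ⟨ℓ, hℓ, -⟩
    exact ⟨ℓ, Finset.mem_filter.1 hℓ⟩
  · rintro ⟨ℓ, hℓ, hvℓ⟩
    exact ⟨ℓ, Finset.mem_filter.2 ⟨hℓ, hvℓ⟩, H.w_pos ℓ hℓ⟩

/-- A full line through a vertex `v` would contain `v` in its interior and so meet, there,
an edge ending at `v`. -/
lemma not_isFullLineL {e : Set Pt} (he : e ∈ H.edges) : ¬ IsFullLineL e := by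
  rintro ⟨a, d, hd, rfl⟩
  obtain ⟨v, hv, t₀, rfl⟩ := H.edge_touch _ he
  have hint : InteriorPt {x | ∃ t : ℝ, x = a + t • d} (a + t₀ • d) :=
    ⟨⟨t₀, rfl⟩, d, hd, 1, one_pos, fun t _ => ⟨t₀ + t, by rw [add_smul, add_assoc]⟩⟩
  obtain ⟨e', he'⟩ : (H.edges.filter fun e => IsEnd (a + t₀ • d) e).Nonempty :=
    Finset.card_pos.1 (by have := H.degree _ hv; omega)
  rw [Finset.mem_filter] at he'
  refine H.no_cross _ he _ he'.1 ?_ _ hint he'.2.1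
  rintro rfl
  exact he'.2.2 hint

lemma isSegL_of_not_isRayL {e : Set Pt} (he : e ∈ H.edges) (hray : ¬ IsRayL e) : IsSegL e :=
  ((H.pre.1 e he).1.resolve_right fun h => h.elim hray (H.not_isFullLineL he))

lemma eq_of_add_smul_mem {e e' : Set Pt} (he : e ∈ H.edges) (he' : e' ∈ H.edges) {v d : Pt}
    (hd : d ≠ 0) {l l' : ℝ} (hll' : 0 < l' / l) (hv : v ∈ e) (hv' : v ∈ e')
    (hvl : v + l • d ∈ e) (hvl' : v + l' • d ∈ e') : e = e' := by
  by_contra hne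
  have hl : l ≠ 0 := by rintro rfl; simp at hll'
  obtain ⟨t, ht, ht1r⟩ := exists_between (lt_min one_pos hll')
  obtain ⟨ht1, htr⟩ := lt_min_iff.1 ht1r
  have hint : InteriorPt e (v + t • l • d) :=
    (H.pre.1 e he).1.convex.interiorPt_add_smul hv hvl (smul_ne_zero hl hd) ht ht1
  refine H.no_cross e he e' he' hne _ hint ?_
  have hmem := (H.pre.1 e' he').1.convex.add_smul_mem hv' hvl'
    ⟨(div_pos ht hll').le, (div_le_one hll').2 htr.le⟩
  have hl' : l' ≠ 0 := by rintro rfl; simp at hll'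
  rwa [smul_smul, show t / (l' / l) * l' = t * l by field_simp, ← smul_smul] at hmem

theorem not_subset_of_forall_divw_eq_zero (i : Fin 3) (c : ℝ)
    (hray : ∀ e ∈ H.edges, e ⊆ {x | dcoord i x = c} → ¬ IsRayL e)
    (hdiv : ∀ v ∈ H.verts, dcoord i v = c → divw H.edges H.w v = 0) :
    ∀ e ∈ H.edges, ¬ e ⊆ {x | dcoord i x = c} := by
  intro e₀ he₀ he₀c
  set S := H.edges.filter (· ⊆ {x | dcoord i x = c})
  have hS : ∀ e ∈ S, e ∈ H.edges ∧ e ⊆ {x | dcoord i x = c} := fun e he =>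
    Finset.mem_filter.1 he
  have hU : IsCompact (⋃ e ∈ S, e) := S.isCompact_biUnion fun e he =>
    (H.isSegL_of_not_isRayL (hS e he).1 (hray e (hS e he).1 (hS e he).2)).isCompact
  obtain ⟨x₀, hx₀⟩ := (H.pre.1 e₀ he₀).1.nontrivial.nonempty
  obtain ⟨p, hpU, hmax⟩ := hU.exists_isMaxOn
    ⟨x₀, Set.mem_biUnion (Finset.mem_filter.2 ⟨he₀, he₀c⟩) hx₀⟩
    (continuous_pdot_left (rayDir i true)).continuousOn
  obtain ⟨e, heS, hpe⟩ := Set.mem_iUnion₂.1 hpU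
  obtain ⟨he, hec⟩ := hS e heS
  have hmax_e := hmax.on_subset (Set.subset_biUnion_of_mem (u := id) heS)
  have hpc : dcoord i p = c := hec hpe
  have hp : p ∈ H.verts :=
    H.ends_mem e he p (isEnd_of_isMaxOn (perpTo_of_subset hec) hpe hmax_e)
  have hin : 0 < wis H.edges H.w i false p := by
    refine H.wis_pos_iff.2 ⟨e, he, hpe, ?_⟩
    rw [Set.inter_eq_left.2 fun x hx =>
      mem_XiRay_false_of_pdot_le ((hec hx).trans hpc.symm) (isMaxOn_iff.1 hmax_e x hx)]
    exact (H.pre.1 e he).1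
  rw [← H.pre.wis_true_eq_false (hdiv p hp hpc)] at hin
  obtain ⟨ℓ, hℓ, hpℓ, hline⟩ := H.wis_pos_iff.1 hin
  obtain ⟨j, hj⟩ := (H.pre.1 ℓ hℓ).2
  obtain rfl := hj.eq_of_isLineL_inter_XiRay hline
  have hℓS : ℓ ∈ S := Finset.mem_filter.2 ⟨hℓ, fun x hx => (hj.dcoord_eq hx hpℓ).trans hpc⟩
  obtain ⟨x, hx, hlt⟩ := exists_pdot_lt_of_isLineL_inter_XiRay hline
  exact (isMaxOn_iff.1 hmax x (Set.mem_biUnion hℓS hx)).not_gt hlt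

lemma exists_perpTo_ne {v : Pt} (hv : v ∈ H.verts) :
    ∃ i j : Fin 3, i ≠ j ∧ (∃ e ∈ H.edges, v ∈ e ∧ PerpTo i e) ∧
      ∃ e ∈ H.edges, v ∈ e ∧ PerpTo j e := by
  obtain ⟨e₁, he₁, e₂, he₂, e₃, he₃, h₁₂, h₁₃, h₂₃⟩ := Finset.two_lt_card.1 (H.degree v hv)
  simp only [Finset.mem_filter] at he₁ he₂ he₃
  obtain ⟨i, hi₁⟩ := (H.pre.1 e₁ he₁.1).2
  obtain ⟨j₂, hj₂⟩ := (H.pre.1 e₂ he₂.1).2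
  obtain ⟨j₃, hj₃⟩ := (H.pre.1 e₃ he₃.1).2
  rcases eq_or_ne i j₂ with rfl | h₂
  swap
  · exact ⟨i, j₂, h₂, ⟨e₁, he₁.1, he₁.2.1, hi₁⟩, e₂, he₂.1, he₂.2.1, hj₂⟩
  rcases eq_or_ne i j₃ with rfl | h₃
  swap
  · exact ⟨i, j₃, h₃, ⟨e₁, he₁.1, he₁.2.1, hi₁⟩, e₃, he₃.1, he₃.2.1, hj₃⟩
  exfalso
  obtain ⟨l₁, hl₁, hm₁⟩ := hi₁.exists_add_smul_rayDir_mem (H.pre.1 e₁ he₁.1).1.nontrivial he₁.2.1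
  obtain ⟨l₂, hl₂, hm₂⟩ := hj₂.exists_add_smul_rayDir_mem (H.pre.1 e₂ he₂.1).1.nontrivial he₂.2.1
  obtain ⟨l₃, hl₃, hm₃⟩ := hj₃.exists_add_smul_rayDir_mem (H.pre.1 e₃ he₃.1).1.nontrivial he₃.2.1
  rcases div_pos_or_div_pos_or_div_pos hl₁ hl₂ hl₃ with h | h | h
  · exact h₁₂ (H.eq_of_add_smul_mem he₁.1 he₂.1 (rayDir_ne_zero i) h he₁.2.1 he₂.2.1 hm₁ hm₂)
  · exact h₁₃ (H.eq_of_add_smul_mem he₁.1 he₃.1 (rayDir_ne_zero i) h he₁.2.1 he₃.2.1 hm₁ hm₃)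
  · exact h₂₃ (H.eq_of_add_smul_mem he₂.1 he₃.1 (rayDir_ne_zero i) h he₂.2.1 he₃.2.1 hm₂ hm₃)

end Honeycomb

/-- If every semiinfinite edge of a honeycomb has integer constant
dual coordinate and every nonintegral vertex has zero divergency, then every edge has
integer constant dual coordinate, and all dual coordinates of all vertices are
integers. -/
theorem stmt11 (H : Honeycomb)
    (hb : ∀ e ∈ H.edges, IsRayL e → EdgeIntegral e)
    (hv : ∀ v ∈ H.verts, (∃ i : Fin 3, ∀ z : ℤ, dcoord i v ≠ (z : ℝ)) →
      divw H.edges H.w v = 0) :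
    (∀ e ∈ H.edges, EdgeIntegral e) ∧
      ∀ v ∈ H.verts, ∀ i : Fin 3, ∃ z : ℤ, dcoord i v = (z : ℝ) := by
  have hedge : ∀ e ∈ H.edges, EdgeIntegral e := by
    intro e he i hi x hx
    by_contra! hc
    refine H.not_subset_of_forall_divw_eq_zero i (dcoord i x) ?_ ?_ e he
      fun y hy => hi.dcoord_eq hy hx
    · intro e' he' hsub hray
      obtain ⟨y, hy⟩ := (H.pre.1 e' he').1.nontrivial.nonempty
      obtain ⟨z, hz⟩ := hb e' he' hray i (perpTo_of_subset hsub) y hy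
      exact hc z ((hsub hy).symm.trans hz)
    · intro v hvV hvc
      exact hv v hvV ⟨i, fun z hz => hc z (hvc ▸ hz)⟩
  refine ⟨hedge, fun v hvV => ?_⟩
  obtain ⟨i, j, hij, ⟨e, he, hve, hi⟩, e', he', hve', hj⟩ := H.exists_perpTo_ne hvV
  exact exists_int_dcoord_of_ne hij (hedge e he i hi v hve) (hedge e' he' j hj v hve')
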